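/- arXiv:1510.07885 — 3 statements merged into one kernel-verified Lean document; each statement's English description precedes it below -/
import Mathlib

section
/- Let a ≥ 2 be an integer, let 𝒳 ⊆ {1,…,a}^ℤ be a closed shift-invariant subset with the left shift σ, and let μ be a σ-invariant probability measure on 𝒳 which is ψ-mixing with rates (ψ_Δ). Let U ⊆ 𝒳 be measurable with respect to the coordinates {0,…,n−1} with ε := μ(U). Then for every integer q ≥ 2n+1, | ∫ 1_U · ∏_{i=2n}^{q} 1_{U^c}∘σ^i dμ − ∫ 1_U · ∏_{i=n}^{q} 1_{U^c}∘σ^i dμ | ≤ ε²·( n + Σ_{i=0}^{n−1} ψ_i ). -/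
/-!
Both integrals are measures of "avoidance" events `U ∩ ⋂_{i ∈ S} σ⁻ⁱ Uᶜ`, and enlarging `S` from
`[2n, q]` to `[n, q]` can only lose points `x ∈ U` that return to `U` at some time `i ∈ [n, 2n)`.
So the difference is at most `∑_{n ≤ i < 2n} μ(U ∩ σ⁻ⁱ U)`, and since `U` depends only on the
coordinates `0, …, n-1`, ψ-mixing with gap `Δ = i - n` bounds each term by `(1 + ψ_Δ) μ(U)²`.
-/

open MeasureTheory Filter Set ENNReal

noncomputable section

/-- The full shift space on an alphabet with `a` symbols (modeling `{1,…,a}` by `Fin a`). -/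
abbrev FullShift (a : ℕ) := ℤ → Fin a

/-- The left shift `(σ x)_k = x_{k+1}`. -/
def shift {a : ℕ} (x : FullShift a) : FullShift a := fun k => x (k + 1)

/-- Entry time to `U`: `τ_U(x) = inf {k ≥ 1 : σ^k x ∈ U}` (`∞` if the orbit never enters `U`). -/
def entryTime {a : ℕ} (U : Set (FullShift a)) (x : FullShift a) : ℕ∞ :=
  ⨅ k ∈ {k : ℕ | 1 ≤ k ∧ shift^[k] x ∈ U}, (k : ℕ∞)

/-- Minimal return time `η = inf {τ_U(x) : x ∈ U}` (as a natural number; `0` if there is no return). -/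
def minReturn {a : ℕ} (U : Set (FullShift a)) : ℕ :=
  sInf {k : ℕ | 1 ≤ k ∧ ∃ x ∈ U, shift^[k] x ∈ U}

/-- The sub-σ-algebra of the product σ-algebra generated by the coordinates in `s ⊆ ℤ`. -/
def coordMS {a : ℕ} (s : Set ℤ) : MeasurableSpace (FullShift a) :=
  MeasurableSpace.comap (fun (x : FullShift a) (i : s) => x (i : ℤ)) inferInstance

/-- `μ` is ψ-mixing with rates `ψ`: `ψ Δ → 0` and for every set `U` measurable w.r.t. the
coordinates `{0,…,n−1}` and every `V` measurable w.r.t. the nonnegative coordinates,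
`|μ(U ∩ σ^{-(Δ+n)}V) − μ(U)μ(V)| ≤ ψ_Δ μ(U) μ(V)`. -/
def PsiMixing {a : ℕ} (μ : Measure (FullShift a)) (ψ : ℕ → ℝ) : Prop :=
  Tendsto ψ atTop (nhds 0) ∧
    ∀ (n Δ : ℕ) (U V : Set (FullShift a)),
      MeasurableSet[coordMS (Ico (0 : ℤ) (n : ℤ))] U →
      MeasurableSet[coordMS {i : ℤ | 0 ≤ i}] V →
      |(μ (U ∩ shift^[Δ + n] ⁻¹' V)).toReal - (μ U).toReal * (μ V).toReal| ≤
        ψ Δ * (μ U).toReal * (μ V).toReal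

lemma measurable_shift {a : ℕ} : Measurable (shift (a := a)) :=
  measurable_pi_lambda _ fun _ => measurable_pi_apply _

lemma coordMS_le {a : ℕ} (s : Set ℤ) : coordMS (a := a) s ≤ MeasurableSpace.pi :=
  Measurable.comap_le (measurable_pi_lambda _ fun _ => measurable_pi_apply _)

lemma coordMS_mono {a : ℕ} {s t : Set ℤ} (h : s ⊆ t) :
    coordMS (a := a) s ≤ coordMS (a := a) t := by
  have hfactor : (fun (x : FullShift a) (i : s) => x (i : ℤ)) =
      (fun (y : t → Fin a) (i : s) => y ⟨i, h i.2⟩) ∘ (fun x (i : t) => x (i : ℤ)) := rfl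
  rw [coordMS, coordMS, hfactor, ← MeasurableSpace.comap_comp]
  exact MeasurableSpace.comap_mono
    (Measurable.comap_le (measurable_pi_lambda _ fun _ => measurable_pi_apply _))

section Avoidance

variable {X : Type*} (T : X → X) (U : Set X)

def avoidSet (S : Finset ℕ) : Set X :=
  U ∩ ⋂ i ∈ S, T^[i] ⁻¹' Uᶜ

lemma indicator_mul_prod_indicator_compl_iterate (S : Finset ℕ) (x : X) :
    U.indicator (fun _ => (1 : ℝ)) x * ∏ i ∈ S, Uᶜ.indicator (fun _ => (1 : ℝ)) (T^[i] x) =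
      (avoidSet T U S).indicator (fun _ => (1 : ℝ)) x := by
  change U.indicator 1 x * ∏ i ∈ S, (T^[i] ⁻¹' Uᶜ).indicator 1 x = (avoidSet T U S).indicator 1 x
  rw [prod_indicator_const_apply, one_pow, avoidSet, Set.inter_indicator_one, Pi.mul_apply]

lemma measurableSet_avoidSet [MeasurableSpace X] (hT : Measurable T) (hU : MeasurableSet U)
    (S : Finset ℕ) : MeasurableSet (avoidSet T U S) :=
  hU.inter (.biInter (S : Set ℕ).to_countable fun i _ => (hT.iterate i) hU.compl)

lemma integral_indicator_mul_prod_indicator_compl_iterate [MeasurableSpace X] (μ : Measure X)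
    (hT : Measurable T) (hU : MeasurableSet U) (S : Finset ℕ) :
    ∫ x, U.indicator (fun _ => (1 : ℝ)) x *
        ∏ i ∈ S, Uᶜ.indicator (fun _ => (1 : ℝ)) (T^[i] x) ∂μ = μ.real (avoidSet T U S) := by
  simp_rw [indicator_mul_prod_indicator_compl_iterate]
  exact integral_indicator_one (measurableSet_avoidSet T U hT hU S)

variable {T U}

lemma avoidSet_anti {S S' : Finset ℕ} (h : S ⊆ S') : avoidSet T U S' ⊆ avoidSet T U S :=
  inter_subset_inter_right _ (biInter_subset_biInter_left h)

lemma avoidSet_sdiff_subset (S S' : Finset ℕ) :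
    avoidSet T U S \ avoidSet T U S' ⊆ ⋃ i ∈ S' \ S, U ∩ T^[i] ⁻¹' U := by
  rintro x ⟨⟨hxU, hxS⟩, hxS'⟩
  obtain ⟨i, hiS', hiU⟩ : ∃ i ∈ S', T^[i] x ∈ U := by simpa [avoidSet, hxU] using hxS'
  have hiS : i ∉ S := fun hiS => mem_iInter₂.1 hxS i hiS hiU
  exact mem_biUnion (Finset.mem_sdiff.2 ⟨hiS', hiS⟩) ⟨hxU, hiU⟩

lemma abs_measureReal_avoidSet_sub_le [MeasurableSpace X] (μ : Measure X) [IsFiniteMeasure μ]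
    (hT : Measurable T) (hU : MeasurableSet U) {S S' : Finset ℕ} (h : S ⊆ S') :
    |μ.real (avoidSet T U S) - μ.real (avoidSet T U S')| ≤
      ∑ i ∈ S' \ S, μ.real (U ∩ T^[i] ⁻¹' U) := by
  rw [abs_of_nonneg (sub_nonneg.2 (measureReal_mono (avoidSet_anti h))),
    ← measureReal_sdiff (avoidSet_anti h) (measurableSet_avoidSet T U hT hU S')]
  exact (measureReal_mono (avoidSet_sdiff_subset S S') (measure_ne_top _ _)).trans
    (measureReal_biUnion_finset_le _ _)

end Avoidance

section Mixing

variable {a : ℕ} {μ : Measure (FullShift a)} {ψ : ℕ → ℝ} {n : ℕ} {U : Set (FullShift a)}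

lemma PsiMixing.measureReal_inter_preimage_shift_le (hmix : PsiMixing μ ψ)
    (hU : MeasurableSet[coordMS (Ico (0 : ℤ) (n : ℤ))] U) (Δ : ℕ) :
    μ.real (U ∩ shift^[Δ + n] ⁻¹' U) ≤ (1 + ψ Δ) * μ.real U ^ 2 := by
  have hU' : MeasurableSet[coordMS {i : ℤ | 0 ≤ i}] U :=
    coordMS_mono (fun _ hi => (mem_Ico.1 hi).1) U hU
  have := (abs_le.1 (hmix.2 n Δ U U hU hU')).2
  simp only [Measure.real] at this ⊢
  linarith

lemma PsiMixing.sum_measureReal_inter_preimage_shift_le (hmix : PsiMixing μ ψ)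
    (hU : MeasurableSet[coordMS (Ico (0 : ℤ) (n : ℤ))] U) :
    ∑ i ∈ Finset.Ico n (2 * n), μ.real (U ∩ shift^[i] ⁻¹' U) ≤
      μ.real U ^ 2 * ((n : ℝ) + ∑ i ∈ Finset.range n, ψ i) := by
  rw [Finset.sum_Ico_eq_sum_range, show 2 * n - n = n by omega]
  calc ∑ Δ ∈ Finset.range n, μ.real (U ∩ shift^[n + Δ] ⁻¹' U)
      ≤ ∑ Δ ∈ Finset.range n, (1 + ψ Δ) * μ.real U ^ 2 :=
        Finset.sum_le_sum fun Δ _ => add_comm n Δ ▸ hmix.measureReal_inter_preimage_shift_le hU Δ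
    _ = μ.real U ^ 2 * ((n : ℝ) + ∑ i ∈ Finset.range n, ψ i) := by
        rw [← Finset.sum_mul, Finset.sum_add_distrib]
        simp only [Finset.sum_const, Finset.card_range, nsmul_eq_mul, mul_one]
        ring

end Mixing

theorem truncated_avoid_bound_general
    (a : ℕ)
    (μ : Measure (FullShift a)) [IsProbabilityMeasure μ]
    (ψ : ℕ → ℝ) (hmix : PsiMixing μ ψ)
    (n : ℕ) (U : Set (FullShift a))
    (hUmeas : MeasurableSet[coordMS (Ico (0 : ℤ) (n : ℤ))] U)
    (ε : ℝ) (hε : ε = (μ U).toReal) :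
    ∀ q : ℕ, 2 * n + 1 ≤ q →
      |(∫ x, U.indicator (fun _ => (1 : ℝ)) x *
            ∏ i ∈ Finset.Icc (2 * n) q, (Uᶜ).indicator (fun _ => (1 : ℝ)) (shift^[i] x) ∂μ) -
          (∫ x, U.indicator (fun _ => (1 : ℝ)) x *
            ∏ i ∈ Finset.Icc n q, (Uᶜ).indicator (fun _ => (1 : ℝ)) (shift^[i] x) ∂μ)| ≤
        ε ^ 2 * ((n : ℝ) + ∑ i ∈ Finset.range n, ψ i) := by
  intro q _
  have hU : MeasurableSet U := coordMS_le _ _ hUmeas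
  have hsub : Finset.Icc (2 * n) q ⊆ Finset.Icc n q := Finset.Icc_subset_Icc_left (by omega)
  have hshort : Finset.Icc n q \ Finset.Icc (2 * n) q ⊆ Finset.Ico n (2 * n) := by
    intro i; simp only [Finset.mem_sdiff, Finset.mem_Icc, Finset.mem_Ico]; omega
  simp only [integral_indicator_mul_prod_indicator_compl_iterate _ _ _ measurable_shift hU]
  calc _ ≤ ∑ i ∈ Finset.Icc n q \ Finset.Icc (2 * n) q, μ.real (U ∩ shift^[i] ⁻¹' U) :=
        abs_measureReal_avoidSet_sub_le μ measurable_shift hU hsub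
    _ ≤ ∑ i ∈ Finset.Ico n (2 * n), μ.real (U ∩ shift^[i] ⁻¹' U) :=
        Finset.sum_le_sum_of_subset_of_nonneg hshort fun _ _ _ => measureReal_nonneg
    _ ≤ ε ^ 2 * ((n : ℝ) + ∑ i ∈ Finset.range n, ψ i) :=
        hε ▸ hmix.sum_measureReal_inter_preimage_shift_le hUmeas

/-- Inequality (4.5) of the paper. -/
theorem truncated_avoid_bound
    (a : ℕ) (ha : 2 ≤ a)
    (𝒳 : Set (FullShift a)) (h𝒳closed : IsClosed 𝒳) (h𝒳inv : shift ⁻¹' 𝒳 = 𝒳)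
    (μ : Measure (FullShift a)) [IsProbabilityMeasure μ] (hμ𝒳 : μ 𝒳 = 1)
    (hinv : MeasurePreserving (shift (a := a)) μ μ)
    (ψ : ℕ → ℝ) (hmix : PsiMixing μ ψ)
    (n : ℕ) (U : Set (FullShift a))
    (hUmeas : MeasurableSet[coordMS (Ico (0 : ℤ) (n : ℤ))] U)
    (ε : ℝ) (hε : ε = (μ U).toReal) :
    ∀ q : ℕ, 2 * n + 1 ≤ q →
      |(∫ x, U.indicator (fun _ => (1 : ℝ)) x *
            ∏ i ∈ Finset.Icc (2 * n) q, (Uᶜ).indicator (fun _ => (1 : ℝ)) (shift^[i] x) ∂μ) -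
          (∫ x, U.indicator (fun _ => (1 : ℝ)) x *
            ∏ i ∈ Finset.Icc n q, (Uᶜ).indicator (fun _ => (1 : ℝ)) (shift^[i] x) ∂μ)| ≤
        ε ^ 2 * ((n : ℝ) + ∑ i ∈ Finset.range n, ψ i) :=
  truncated_avoid_bound_general a μ ψ hmix n U hUmeas ε hε
end
end

section
/- Let a ≥ 2 be an integer, let 𝒳 ⊆ {1,…,a}^ℤ be a closed shift-invariant subset with the left shift σ, and let μ be a σ-invariant probability measure on 𝒳 which is ψ-mixing with nonincreasing rates (ψ_Δ). Let 𝒰_n ⊆ 𝒳 be measurable with respect to the coordinates {−n,…,n−1} with ε_n := μ(𝒰_n) > 0 and minimal return time η_n satisfying 1 ≤ η_n < n + 1. Suppose 𝒱_n ⊇ 𝒰_n is a set measurable with respect to the coordinates {−n,…,−n+⌊η_n/2⌋}. Then for every integer i ≥ η_n, μ(𝒰_n ∩ σ^{−i}𝒰_n) ≤ μ(𝒱_n)·ε_n·(1 + ψ_{⌈η_n/2⌉−1}). -/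
open MeasureTheory Filter Set ENNReal

noncomputable section

lemma shift_iter {a : ℕ} (k : ℕ) (x : FullShift a) (j : ℤ) : shift^[k] x j = x (j + k) := by
  induction k generalizing x j with
  | zero => simp
  | succ k ih =>
    rw [Function.iterate_succ_apply, ih]
    simp only [shift]
    congr 1
    push_cast
    ring

lemma coordMS_le_pi {a : ℕ} (s : Set ℤ) :
    coordMS (a := a) s ≤ (inferInstance : MeasurableSpace (FullShift a)) :=
  Measurable.comap_le (measurable_pi_lambda _ fun i => measurable_pi_apply _)

lemma meas_shift {a : ℕ} {s t : Set ℤ} (k : ℕ) (hst : ∀ j ∈ s, j + (k : ℤ) ∈ t)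
    {V : Set (FullShift a)} (hV : MeasurableSet[coordMS s] V) :
    MeasurableSet[coordMS t] (shift^[k] ⁻¹' V) := by
  rw [coordMS, MeasurableSpace.measurableSet_comap] at hV ⊢
  obtain ⟨T, hT, rfl⟩ := hV
  refine ⟨(fun y : t → Fin a => fun i : s => y ⟨(i : ℤ) + k, hst i i.2⟩) ⁻¹' T,
    (measurable_pi_lambda _ fun _ => measurable_pi_apply _) hT, ?_⟩
  ext x
  simp [shift_iter]

/-- Second case of the lemma in the proof of the Main Theorem. -/
theorem short_return_envelope_bound
    (a : ℕ) (ha : 2 ≤ a)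
    (𝒳 : Set (FullShift a)) (h𝒳closed : IsClosed 𝒳) (h𝒳inv : shift ⁻¹' 𝒳 = 𝒳)
    (μ : Measure (FullShift a)) [IsProbabilityMeasure μ] (hμ𝒳 : μ 𝒳 = 1)
    (hinv : MeasurePreserving (shift (a := a)) μ μ)
    (ψ : ℕ → ℝ) (hmix : PsiMixing μ ψ) (hanti : Antitone ψ)
    (n : ℕ) (U : Set (FullShift a))
    (hUmeas : MeasurableSet[coordMS (Ico (-(n : ℤ)) (n : ℤ))] U)
    (hUpos : 0 < μ U)
    (hη₁ : 1 ≤ minReturn U) (hη₂ : minReturn U < n + 1)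
    (V : Set (FullShift a)) (hUV : U ⊆ V)
    (hVmeas : MeasurableSet[coordMS (Icc (-(n : ℤ)) (-(n : ℤ) + (minReturn U / 2 : ℕ)))] V) :
    ∀ i : ℕ, minReturn U ≤ i →
      (μ (U ∩ shift^[i] ⁻¹' U)).toReal ≤
        (μ V).toReal * (μ U).toReal * (1 + ψ ((minReturn U + 1) / 2 - 1)) := by
  intro i hi
  obtain ⟨-, hmix2⟩ := hmix
  set η := minReturn U with hηdef
  set m := η / 2 with hmdef
  have hU : MeasurableSet U := coordMS_le_pi _ _ hUmeas
  have hV : MeasurableSet V := coordMS_le_pi _ _ hVmeas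
  set Δ := i - (m + 1) with hΔdef
  have hΔi : Δ + (m + 1) = i := by omega
  have hA : MeasurableSet[coordMS (Ico (0 : ℤ) ((m + 1 : ℕ) : ℤ))] (shift^[n] ⁻¹' V) := by
    refine meas_shift n ?_ hVmeas
    intro j hj
    simp only [mem_Icc] at hj
    simp only [mem_Ico]
    push_cast
    omega
  have hB : MeasurableSet[coordMS {i : ℤ | 0 ≤ i}] (shift^[n] ⁻¹' U) := by
    refine meas_shift n ?_ hUmeas
    intro j hj
    simp only [mem_Ico] at hj
    simp only [mem_setOf_eq]
    omega
  have key := hmix2 (m + 1) Δ _ _ hA hB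
  rw [hΔi] at key
  have hcomm : ∀ x : FullShift a, shift^[n] (shift^[i] x) = shift^[i] (shift^[n] x) := by
    intro x
    rw [← Function.iterate_add_apply, ← Function.iterate_add_apply, Nat.add_comm]
  have hset : (shift^[n] ⁻¹' V) ∩ shift^[i] ⁻¹' (shift^[n] ⁻¹' U)
      = shift^[n] ⁻¹' (V ∩ shift^[i] ⁻¹' U) := by
    ext x
    simp only [mem_inter_iff, mem_preimage, hcomm]
  rw [hset] at key
  have hmp : MeasurePreserving (shift (a := a))^[n] μ μ := hinv.iterate n
  have hUi : MeasurableSet (shift^[i] ⁻¹' U) := hU.preimage (measurable_shift.iterate i)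
  have hμA : μ (shift^[n] ⁻¹' V) = μ V := hmp.measure_preimage hV.nullMeasurableSet
  have hμB : μ (shift^[n] ⁻¹' U) = μ U := hmp.measure_preimage hU.nullMeasurableSet
  have hμAB : μ (shift^[n] ⁻¹' (V ∩ shift^[i] ⁻¹' U)) = μ (V ∩ shift^[i] ⁻¹' U) :=
    hmp.measure_preimage (hV.inter hUi).nullMeasurableSet
  rw [hμA, hμB, hμAB] at key
  have hmono : (μ (U ∩ shift^[i] ⁻¹' U)).toReal ≤ (μ (V ∩ shift^[i] ⁻¹' U)).toReal :=
    ENNReal.toReal_mono (measure_ne_top μ _)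
      (measure_mono (inter_subset_inter_left _ hUV))
  have hψ : ψ Δ ≤ ψ ((η + 1) / 2 - 1) := hanti (by omega)
  have h0 : (0 : ℝ) ≤ (μ V).toReal * (μ U).toReal :=
    mul_nonneg ENNReal.toReal_nonneg ENNReal.toReal_nonneg
  have habs := abs_le.mp key
  nlinarith [habs.1, habs.2]
end
end

section
/- Let 𝒳 = {0,1,2}^ℤ with the left shift σ, and let μ be the Bernoulli (i.i.d. product) probability measure on 𝒳 determined by a probability vector (p₀, p₁, p₂) ∈ (0,1)³ with p₀ + p₁ + p₂ = 1. For n ≥ 1 let 𝒰_n = {x ∈ 𝒳 : x₀ = 0 and x_i ∈ {1,2} for 1 ≤ i ≤ n−1}, and let τ_n(x) = inf{k ≥ 1 : σ^k x ∈ 𝒰_n}. Then the rescaled entry times X_n = μ(𝒰_n)·τ_n converge in law to an exponential random variable of parameter 1; that is, for every t > 0, μ{x ∈ 𝒳 : μ(𝒰_n)·τ_n(x) ≥ t} → e^{−t} as n → ∞. -/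
/-!
Write `A k = σ^{-k} 𝒰_n` for an occurrence of the word `0 (1|2)^(n-1)` at position `k`,
`q = μ(𝒰_n)`, and `g R` for the probability that none of `A 1, …, A R` occurs, so that
`{μ(𝒰_n) τ_n ≥ t}` is the event measured by `g (⌈t/q⌉ - 1)`. The word cannot overlap itself, so an
occurrence at `R + 1` excludes occurrences at `R - n + 2, …, R`, and `A (R + 1)` is independent of
the coordinates before `R + 1`; this gives the renewal identity `g (R + 1) = g R - q g (R - n + 1)`.
Since `0 ≤ g (R - n + 1) - g R ≤ (n - 1) q`, induction gives `|g R - (1 - q)^R| ≤ R (n - 1) q²`,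
which tends to `0` because `R q → t` and `n q → 0`, while `(1 - q)^R → e^(-t)`.
-/

open MeasureTheory Filter Set ENNReal

noncomputable section

open ProbabilityTheory Topology

section Avoidance

variable {Ω : Type*} {A : ℕ → Set Ω}

def avoidUntil (A : ℕ → Set Ω) (R : ℕ) : Set Ω := ⋂ k ∈ Finset.Icc 1 R, (A k)ᶜ

lemma mem_avoidUntil {R : ℕ} {x : Ω} : x ∈ avoidUntil A R ↔ ∀ k, 1 ≤ k → k ≤ R → x ∉ A k := by
  simp [avoidUntil, and_imp]

lemma avoidUntil_succ (R : ℕ) : avoidUntil A (R + 1) = avoidUntil A R \ A (R + 1) := by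
  ext x
  simp only [mem_avoidUntil, Set.mem_sdiff]
  refine ⟨fun h => ⟨fun k hk hkR => h k hk (by omega), h _ (by omega) le_rfl⟩, ?_⟩
  rintro ⟨h, hR⟩ k hk hkR
  rcases Nat.lt_or_eq_of_le hkR with hkR | rfl
  exacts [h k hk (by omega), hR]

lemma avoidUntil_antitone : Antitone (avoidUntil A) := fun _ _ hjR _ hx =>
  mem_avoidUntil.2 fun k hk hkj => mem_avoidUntil.1 hx k hk (hkj.trans hjR)

lemma avoidUntil_inter_eq {m : ℕ} (hdisj : ∀ j k, j < k → k ≤ j + m → Disjoint (A j) (A k))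
    (R : ℕ) : avoidUntil A R ∩ A (R + 1) = avoidUntil A (R - m) ∩ A (R + 1) := by
  refine Subset.antisymm (inter_subset_inter_left _ (avoidUntil_antitone (Nat.sub_le R m))) ?_
  rintro x ⟨hx, hxR⟩
  refine ⟨mem_avoidUntil.2 fun k hk hkR hxk => ?_, hxR⟩
  rcases le_or_gt k (R - m) with hkm | hkm
  · exact mem_avoidUntil.1 hx k hk hkm hxk
  · exact (hdisj k (R + 1) (by omega) (by omega)).notMem_of_mem_left hxk hxR

variable [MeasurableSpace Ω] {μ : Measure Ω} {q : ℝ}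

lemma measureReal_avoidUntil_le_add [IsFiniteMeasure μ] (hq : ∀ k, μ.real (A k) = q) (j d : ℕ) :
    μ.real (avoidUntil A j) ≤ μ.real (avoidUntil A (j + d)) + d * q := by
  induction d with
  | zero => simp
  | succ d ih =>
    have hsub : avoidUntil A (j + d) ⊆ avoidUntil A (j + d + 1) ∪ A (j + d + 1) := by
      rw [avoidUntil_succ]
      exact fun x hx => (em (x ∈ A (j + d + 1))).elim Or.inr fun h => Or.inl ⟨hx, h⟩
    have := (measureReal_mono hsub (μ := μ)).trans (measureReal_union_le _ _)
    rw [hq] at this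
    push_cast [← add_assoc]
    linarith

lemma measureReal_avoidUntil_succ [IsFiniteMeasure μ] {m : ℕ} (hA : ∀ k, MeasurableSet (A k))
    (hq : ∀ k, μ.real (A k) = q)
    (hdisj : ∀ j k, j < k → k ≤ j + m → Disjoint (A j) (A k))
    (hindep : ∀ R, μ.real (avoidUntil A (R - m) ∩ A (R + 1)) =
      μ.real (avoidUntil A (R - m)) * μ.real (A (R + 1))) (R : ℕ) :
    μ.real (avoidUntil A (R + 1)) =
      μ.real (avoidUntil A R) - q * μ.real (avoidUntil A (R - m)) := by
  rw [avoidUntil_succ, ← measureReal_sdiff_add_inter (hA (R + 1)) (s := avoidUntil A R),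
    avoidUntil_inter_eq hdisj, hindep, hq]
  ring

theorem abs_measureReal_avoidUntil_sub_pow_le [IsProbabilityMeasure μ] {m : ℕ}
    (hA : ∀ k, MeasurableSet (A k))
    (hq : ∀ k, μ.real (A k) = q)
    (hdisj : ∀ j k, j < k → k ≤ j + m → Disjoint (A j) (A k))
    (hindep : ∀ R, μ.real (avoidUntil A (R - m) ∩ A (R + 1)) =
      μ.real (avoidUntil A (R - m)) * μ.real (A (R + 1))) (R : ℕ) :
    |μ.real (avoidUntil A R) - (1 - q) ^ R| ≤ R * m * q ^ 2 := by
  have hq0 : 0 ≤ q := hq 0 ▸ measureReal_nonneg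
  have hq1 : q ≤ 1 := hq 0 ▸ measureReal_le_one
  induction R with
  | zero => simp [avoidUntil]
  | succ R ih =>
    set e := μ.real (avoidUntil A (R - m)) - μ.real (avoidUntil A R)
    have he0 : 0 ≤ e := sub_nonneg.2 (measureReal_mono (avoidUntil_antitone (Nat.sub_le R m)))
    have hem : e ≤ m * q := by
      have hle := measureReal_avoidUntil_le_add hq (R - m) (R - (R - m))
      rw [Nat.add_sub_cancel' (Nat.sub_le R m)] at hle
      have hRm : ((R - (R - m) : ℕ) : ℝ) ≤ m := by exact_mod_cast (by omega)
      linarith [mul_le_mul_of_nonneg_right hRm hq0]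
    have hrec : μ.real (avoidUntil A (R + 1)) - (1 - q) ^ (R + 1) =
        (1 - q) * (μ.real (avoidUntil A R) - (1 - q) ^ R) - q * e := by
      rw [measureReal_avoidUntil_succ hA hq hdisj hindep]; ring
    rw [hrec]
    calc |(1 - q) * (μ.real (avoidUntil A R) - (1 - q) ^ R) - q * e|
        ≤ (1 - q) * (R * m * q ^ 2) + q * (m * q) := by
          refine (abs_sub _ _).trans (add_le_add ?_ ?_)
          · rw [abs_mul, abs_of_nonneg (sub_nonneg.2 hq1)]; gcongr
          · rw [abs_of_nonneg (mul_nonneg hq0 he0)]; gcongr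
      _ ≤ ↑(R + 1) * m * q ^ 2 := by
          have : 0 ≤ q * (R * m * q ^ 2) := by positivity
          push_cast
          linarith

end Avoidance

abbrev bernoulliShift {a : ℕ} (P : Measure (Fin a)) : Measure (FullShift a) :=
  Measure.infinitePi fun _ : ℤ => P

theorem eq_bernoulliShift {a : ℕ} (P : Measure (Fin a)) [IsProbabilityMeasure P]
    {μ : Measure (FullShift a)}
    (h : ∀ (s : Finset ℤ) (f : ℤ → Fin a), μ {x | ∀ i ∈ s, x i = f i} = ∏ i ∈ s, P {f i}) :
    μ = bernoulliShift P := by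
  have : Nonempty (Fin a) := nonempty_of_isProbabilityMeasure P
  refine IsProjectiveLimit.unique (P := fun I : Finset ℤ => Measure.pi fun _ : I => P) (fun I => ?_)
    (Measure.isProjectiveLimit_infinitePi _)
  refine Measure.ext_of_singleton fun f => ?_
  set g : ℤ → Fin a := fun i => if hi : i ∈ I then f ⟨i, hi⟩ else Classical.arbitrary _
  have hpre : I.restrict ⁻¹' ({f} : Set (I → Fin a)) = {x | ∀ i ∈ I, x i = g i} := by
    ext x
    simp only [mem_preimage, mem_singleton_iff, funext_iff, Finset.restrict, Subtype.forall,
      mem_ofPred_eq, g]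
    exact forall₂_congr fun i hi => by rw [dif_pos hi]
  rw [Measure.map_apply (Finset.measurable_restrict I) (measurableSet_singleton f), hpre, h,
    Measure.pi_singleton, ← Finset.prod_coe_sort]
  simp [g]

lemma exists_isProbabilityMeasure_measure_singleton {a : ℕ} (p : Fin a → ℝ) (hp : ∀ j, 0 ≤ p j)
    (hsum : ∑ j, p j = 1) :
    ∃ P : Measure (Fin a), IsProbabilityMeasure P ∧ ∀ j, P {j} = ENNReal.ofReal (p j) :=
  ⟨(PMF.ofFintype (fun j => ENNReal.ofReal (p j)) (by
      rw [← ENNReal.ofReal_sum_of_nonneg fun j _ => hp j, hsum, ENNReal.ofReal_one])).toMeasure,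
    inferInstance, fun j => by simp⟩

section Pattern

variable {a : ℕ}

lemma shift_iterate_apply (k : ℕ) (x : FullShift a) (j : ℤ) : shift^[k] x j = x (j + k) := by
  induction k generalizing x with
  | zero => simp
  | succ k ih => rw [Function.iterate_succ_apply, ih]; simp [shift, add_assoc]

def patternSet (B₀ B₁ : Set (Fin a)) (m : ℕ) : Set (FullShift a) :=
  {x | x 0 ∈ B₀ ∧ ∀ i : ℕ, 1 ≤ i → i ≤ m → x i ∈ B₁}

lemma shift_iterate_preimage_patternSet (B₀ B₁ : Set (Fin a)) (m k : ℕ) :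
    shift^[k] ⁻¹' patternSet B₀ B₁ m =
      Set.pi (Finset.Icc (k : ℤ) (k + m) : Set ℤ) fun j => if j = k then B₀ else B₁ := by
  ext x
  simp only [patternSet, mem_preimage, shift_iterate_apply, mem_ofPred_eq, zero_add, Set.mem_pi,
    Finset.coe_Icc, mem_Icc]
  constructor
  · rintro ⟨h₀, h₁⟩ j ⟨hkj, hjm⟩
    split_ifs with hjk
    · exact hjk ▸ h₀
    · obtain ⟨i, rfl⟩ : ∃ i : ℕ, j = i + k := ⟨(j - k).toNat, by omega⟩
      exact h₁ i (by omega) (by omega)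
  · intro h
    refine ⟨by simpa using h k ⟨le_rfl, by omega⟩, fun i hi hm => ?_⟩
    simpa [show (i : ℤ) + k ≠ k by omega] using h (i + k) ⟨by omega, by omega⟩

lemma measurableSet_coordMS_pi {S : Set ℤ} {s : Finset ℤ} (hs : ↑s ⊆ S) (t : ℤ → Set (Fin a)) :
    MeasurableSet[coordMS S] (Set.pi ↑s t) := by
  have heval : ∀ i ∈ S, Measurable[coordMS S] fun x : FullShift a => x i := fun i hi =>
    (measurable_pi_apply (⟨i, hi⟩ : S)).comp (comap_measurable fun (x : FullShift a) (j : S) => x j)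
  rw [Set.pi_def]
  exact MeasurableSet.biInter s.countable_toSet fun i hi =>
    heval i (hs hi) .of_discrete

lemma coordMS_eq_iSup (S : Set ℤ) :
    coordMS (a := a) S =
      ⨆ i ∈ S, MeasurableSpace.comap (fun x : FullShift a => x i) inferInstance := by
  simp only [coordMS, MeasurableSpace.pi, MeasurableSpace.comap_iSup, MeasurableSpace.comap_comp]
  rw [iSup_subtype']
  rfl

lemma indep_coordMS_bernoulliShift (P : Measure (Fin a)) [IsProbabilityMeasure P] {S T : Set ℤ}
    (hST : Disjoint S T) : Indep (coordMS S) (coordMS T) (bernoulliShift P) := by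
  rw [coordMS_eq_iSup, coordMS_eq_iSup]
  exact indep_iSup_of_disjoint (fun i => (measurable_pi_apply i).comap_le)
    (iIndepFun_infinitePi (X := fun _ ω => ω) fun _ => measurable_id).iIndep hST

end Pattern

section BernoulliPattern

variable {a : ℕ} (P : Measure (Fin a)) [IsProbabilityMeasure P] {B₀ B₁ : Set (Fin a)} {m : ℕ}

lemma measurableSet_shift_iterate_preimage_patternSet (k : ℕ) :
    MeasurableSet (shift^[k] ⁻¹' patternSet B₀ B₁ m) := by
  rw [shift_iterate_preimage_patternSet]
  exact .pi (Finset.countable_toSet _) fun _ _ => .of_discrete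

lemma measureReal_shift_iterate_preimage_patternSet (k : ℕ) :
    (bernoulliShift P).real (shift^[k] ⁻¹' patternSet B₀ B₁ m) = P.real B₀ * P.real B₁ ^ m := by
  rw [shift_iterate_preimage_patternSet, measureReal_def,
    Measure.infinitePi_pi _ fun _ _ => .of_discrete, Finset.Icc_eq_cons_Ioc (by omega),
    Finset.prod_cons, if_pos rfl,
    Finset.prod_congr rfl fun j hj => congrArg P (if_neg (Finset.mem_Ioc.1 hj).1.ne'),
    Finset.prod_const, Int.card_Ioc]
  simp [measureReal_def]

lemma disjoint_shift_iterate_preimage_patternSet (hB : Disjoint B₀ B₁) {j k : ℕ} (hjk : j < k)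
    (hkj : k ≤ j + m) :
    Disjoint (shift^[j] ⁻¹' patternSet B₀ B₁ m) (shift^[k] ⁻¹' patternSet B₀ B₁ m) := by
  rw [shift_iterate_preimage_patternSet, shift_iterate_preimage_patternSet, Set.disjoint_left]
  intro x hj hk
  have h₁ := hj k (by simp only [Finset.coe_Icc, mem_Icc]; omega)
  have h₀ := hk k (by simp)
  simp only [↓reduceIte, show (k : ℤ) ≠ j by omega] at h₀ h₁
  exact hB.notMem_of_mem_left h₀ h₁

lemma measureReal_avoidUntil_inter_patternSet_eq_mul (R : ℕ) :
    (bernoulliShift P).real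
        (avoidUntil (fun k => shift^[k] ⁻¹' patternSet B₀ B₁ m) (R - m) ∩
          shift^[R + 1] ⁻¹' patternSet B₀ B₁ m) =
      (bernoulliShift P).real (avoidUntil (fun k => shift^[k] ⁻¹' patternSet B₀ B₁ m) (R - m)) *
        (bernoulliShift P).real (shift^[R + 1] ⁻¹' patternSet B₀ B₁ m) := by
  have hindep := indep_coordMS_bernoulliShift P (Set.Iio_disjoint_Ici (le_refl ((R + 1 : ℕ) : ℤ)))
  have hpast : MeasurableSet[coordMS (Iio ((R + 1 : ℕ) : ℤ))]
      (avoidUntil (fun k => shift^[k] ⁻¹' patternSet B₀ B₁ m) (R - m)) := by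
    refine Finset.measurableSet_biInter _ fun k hk => MeasurableSet.compl ?_
    dsimp only
    rw [shift_iterate_preimage_patternSet]
    refine measurableSet_coordMS_pi (fun i hi => ?_) _
    simp only [Finset.mem_Icc, Finset.coe_Icc, mem_Icc, mem_Iio] at hk hi ⊢
    omega
  have hfuture : MeasurableSet[coordMS (Ici ((R + 1 : ℕ) : ℤ))]
      (shift^[R + 1] ⁻¹' patternSet B₀ B₁ m) := by
    rw [shift_iterate_preimage_patternSet]
    refine measurableSet_coordMS_pi (fun i hi => ?_) _
    simp only [Finset.coe_Icc, mem_Icc, mem_Ici] at hi ⊢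
    omega
  simp only [measureReal_def, (Indep_iff _ _ _).1 hindep _ _ hpast hfuture, ENNReal.toReal_mul]

theorem abs_measureReal_avoidUntil_patternSet_sub_pow_le (hB : Disjoint B₀ B₁) (R : ℕ) :
    |(bernoulliShift P).real (avoidUntil (fun k => shift^[k] ⁻¹' patternSet B₀ B₁ m) R) -
        (1 - P.real B₀ * P.real B₁ ^ m) ^ R| ≤ R * m * (P.real B₀ * P.real B₁ ^ m) ^ 2 :=
  abs_measureReal_avoidUntil_sub_pow_le measurableSet_shift_iterate_preimage_patternSet
    (measureReal_shift_iterate_preimage_patternSet P)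
    (fun _ _ => disjoint_shift_iterate_preimage_patternSet hB)
    (measureReal_avoidUntil_inter_patternSet_eq_mul P) R

end BernoulliPattern

section EntryTime

variable {a : ℕ}

lemma natCast_le_entryTime_iff {U : Set (FullShift a)} {x : FullShift a} {K : ℕ} :
    (K : ℕ∞) ≤ entryTime U x ↔ x ∈ avoidUntil (fun k => shift^[k] ⁻¹' U) (K - 1) := by
  simp only [entryTime, le_iInf_iff, mem_ofPred_eq, mem_avoidUntil, mem_preimage, Nat.cast_le,
    and_imp]
  exact ⟨fun h k hk hkK hU => by have := h k hk hU; omega,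
    fun h k hk hU => by_contra fun hlt => h k hk (by omega) hU⟩

lemma ofReal_le_ofReal_mul_iff_natCeil_le {q : ℝ} (hq : 0 < q) (t : ℝ) (τ : ℕ∞) :
    ENNReal.ofReal t ≤ ENNReal.ofReal q * (τ : ℝ≥0∞) ↔ (⌈t / q⌉₊ : ℕ∞) ≤ τ := by
  induction τ using ENat.recTopCoe with
  | top => simp [ENNReal.mul_top, hq]
  | coe k =>
    rw [ENat.toENNReal_coe, ← ENNReal.ofReal_natCast, ← ENNReal.ofReal_mul hq.le,
      ENNReal.ofReal_le_ofReal_iff (by positivity), Nat.cast_le, Nat.ceil_le, div_le_iff₀ hq,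
      mul_comm]

lemma setOf_le_measure_mul_entryTime (μ : Measure (FullShift a)) [IsFiniteMeasure μ]
    {U : Set (FullShift a)} (hU : 0 < μ.real U) (t : ℝ) :
    {x | ENNReal.ofReal t ≤ μ U * (entryTime U x : ℝ≥0∞)} =
      avoidUntil (fun k => shift^[k] ⁻¹' U) (⌈t / μ.real U⌉₊ - 1) := by
  ext x
  rw [mem_ofPred_eq, ← ofReal_measureReal, ofReal_le_ofReal_mul_iff_natCeil_le hU,
    natCast_le_entryTime_iff]

end EntryTime

section Limits

variable {ι : Type*} {l : Filter ι} {q : ι → ℝ} {t : ℝ}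

lemma tendsto_one_sub_pow_exp_neg {R : ι → ℕ} (hq : Tendsto q l (𝓝 0))
    (hRq : Tendsto (fun i => R i * q i) l (𝓝 t)) :
    Tendsto (fun i => (1 - q i) ^ R i) l (𝓝 (Real.exp (-t))) := by
  have hlt : ∀ᶠ i in l, q i < 1 := hq.eventually_lt_const one_pos
  have hlower : Tendsto (fun i => -(R i * q i) / (1 - q i)) l (𝓝 (-t)) := by
    have h := hRq.neg.div (tendsto_const_nhds.sub hq) (by norm_num : (1 : ℝ) - 0 ≠ 0)
    rwa [sub_zero, div_one] at h
  have hlog : Tendsto (fun i => R i * Real.log (1 - q i)) l (𝓝 (-t)) := by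
    refine tendsto_of_tendsto_of_tendsto_of_le_of_le' hlower hRq.neg ?_ ?_ <;>
      filter_upwards [hlt] with i hi <;> have h1q : 0 < 1 - q i := sub_pos.2 hi
    · calc -(R i * q i) / (1 - q i) = R i * (1 - (1 - q i)⁻¹) := by field_simp; ring
        _ ≤ R i * Real.log (1 - q i) := by gcongr; exact Real.one_sub_inv_le_log_of_pos h1q
    · calc R i * Real.log (1 - q i) ≤ R i * (1 - q i - 1) := by
            gcongr; exact Real.log_le_sub_one_of_pos h1q
        _ = -(R i * q i) := by ring
  refine ((Real.continuous_exp.tendsto _).comp hlog).congr' ?_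
  filter_upwards [hlt] with i hi
  rw [Function.comp_apply, Real.exp_nat_mul, Real.exp_log (sub_pos.2 hi)]

lemma tendsto_natCeil_div_sub_one_mul (ht : 0 < t) (hq0 : ∀ i, 0 < q i)
    (hq : Tendsto q l (𝓝 0)) :
    Tendsto (fun i => ((⌈t / q i⌉₊ - 1 : ℕ) : ℝ) * q i) l (𝓝 t) := by
  have hbounds : ∀ i, t - q i ≤ ((⌈t / q i⌉₊ - 1 : ℕ) : ℝ) * q i ∧
      ((⌈t / q i⌉₊ - 1 : ℕ) : ℝ) * q i ≤ t := by
    intro i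
    have hpos : 0 < t / q i := div_pos ht (hq0 i)
    rw [Nat.cast_sub (Nat.one_le_iff_ne_zero.2 (Nat.ceil_pos.2 hpos).ne'), Nat.cast_one]
    have h₁ := Nat.le_ceil (t / q i)
    have h₂ := Nat.ceil_lt_add_one hpos.le
    rw [div_le_iff₀ (hq0 i)] at h₁
    rw [← sub_lt_iff_lt_add, lt_div_iff₀ (hq0 i)] at h₂
    constructor <;> nlinarith
  refine tendsto_of_tendsto_of_tendsto_of_le_of_le (by simpa using tendsto_const_nhds.sub hq)
    tendsto_const_nhds (fun i => (hbounds i).1) fun i => (hbounds i).2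

end Limits

theorem tendsto_measureReal_le_measure_patternSet_mul_entryTime {a : ℕ} (P : Measure (Fin a))
    [IsProbabilityMeasure P] {B₀ B₁ : Set (Fin a)} (hB : Disjoint B₀ B₁) (h₀ : 0 < P.real B₀)
    (h₁ : 0 < P.real B₁) (h₁' : P.real B₁ < 1) {t : ℝ} (ht : 0 < t) :
    Tendsto (fun m : ℕ => (bernoulliShift P).real {x | ENNReal.ofReal t ≤
        bernoulliShift P (patternSet B₀ B₁ m) * (entryTime (patternSet B₀ B₁ m) x : ℝ≥0∞)})
      atTop (𝓝 (Real.exp (-t))) := by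
  set q : ℕ → ℝ := fun m => P.real B₀ * P.real B₁ ^ m
  have hμU m : (bernoulliShift P).real (patternSet B₀ B₁ m) = q m := by
    simpa using measureReal_shift_iterate_preimage_patternSet P (B₀ := B₀) (B₁ := B₁) (m := m) 0
  have hq₀ m : 0 < q m := mul_pos h₀ (pow_pos h₁ m)
  have hq : Tendsto q atTop (𝓝 0) := by
    simpa using (tendsto_pow_atTop_nhds_zero_of_lt_one h₁.le h₁').const_mul (P.real B₀)
  have hmq : Tendsto (fun m : ℕ => (m : ℝ) * q m) atTop (𝓝 0) := by
    simpa [q, mul_left_comm] using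
      (tendsto_self_mul_const_pow_of_lt_one h₁.le h₁').const_mul (P.real B₀)
  set R : ℕ → ℕ := fun m => ⌈t / q m⌉₊ - 1
  have hRq : Tendsto (fun m => (R m : ℝ) * q m) atTop (𝓝 t) :=
    tendsto_natCeil_div_sub_one_mul ht hq₀ hq
  have herror : Tendsto (fun m : ℕ => (R m : ℝ) * m * q m ^ 2) atTop (𝓝 0) := by
    simpa using (hRq.mul hmq).congr fun m => by ring
  refine (tendsto_one_sub_pow_exp_neg hq hRq).congr_dist
    (squeeze_zero (fun _ => dist_nonneg) (fun m => ?_) herror)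
  rw [setOf_le_measure_mul_entryTime _ ((hμU m).symm ▸ hq₀ m), hμU, Real.dist_eq, abs_sub_comm]
  exact abs_measureReal_avoidUntil_patternSet_sub_pow_le P hB (R m)

/-- Example 3.1 of the paper: exponential entry-time law for the Bernoulli measure on
`{0,1,2}^ℤ` and the sets `𝒰_n = {x : x₀ = 0, x_i ∈ {1,2} for 1 ≤ i ≤ n−1}`. -/
theorem bernoulli_example
    (μ : Measure (FullShift 3)) [IsProbabilityMeasure μ]
    (p : Fin 3 → ℝ) (hp : ∀ j, p j ∈ Set.Ioo (0 : ℝ) 1)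
    (hsum : p 0 + p 1 + p 2 = 1)
    (hBernoulli : ∀ (s : Finset ℤ) (f : ℤ → Fin 3),
      (μ {x : FullShift 3 | ∀ i ∈ s, x i = f i}).toReal = ∏ i ∈ s, p (f i))
    (U : ℕ → Set (FullShift 3))
    (hUdef : ∀ n : ℕ, U n =
      {x : FullShift 3 | x 0 = 0 ∧
        ∀ i : ℕ, 1 ≤ i → i ≤ n - 1 → (x (i : ℤ) = 1 ∨ x (i : ℤ) = 2)}) :
    ∀ t : ℝ, 0 < t →
      Tendsto
        (fun n : ℕ =>
          (μ {x : FullShift 3 |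
            ENNReal.ofReal t ≤ μ (U n) * (entryTime (U n) x : ℝ≥0∞)}).toReal)
        atTop (nhds (Real.exp (-t))) := by
  intro t ht
  obtain ⟨P, _, hP⟩ := exists_isProbabilityMeasure_measure_singleton p (fun j => (hp j).1.le)
    (by simpa [Fin.sum_univ_three] using hsum)
  have hμ : μ = bernoulliShift P := eq_bernoulliShift P fun s f => by
    rw [← ENNReal.ofReal_toReal (measure_ne_top μ _), hBernoulli,
      ENNReal.ofReal_prod_of_nonneg fun i _ => (hp _).1.le]
    simp only [hP]
  have hU n : U n = patternSet {0} {1, 2} (n - 1) := by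
    rw [hUdef]; ext x; simp [patternSet]
  have hP₀ : P.real {0} = p 0 := by simp [measureReal_def, hP, (hp 0).1.le]
  have hP₁₂ : P.real {1, 2} = 1 - p 0 := by
    rw [show ({1, 2} : Set (Fin 3)) = {0}ᶜ by ext j; fin_cases j <;> simp,
      probReal_compl_eq_one_sub (measurableSet_singleton 0), hP₀]
  simp only [hU, hμ]
  exact (tendsto_measureReal_le_measure_patternSet_mul_entryTime P (by simp) (hP₀ ▸ (hp 0).1)
    (by linarith [(hp 0).2]) (by linarith [(hp 0).1]) ht).comp (tendsto_sub_atTop_nat 1)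
end
end
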